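/- Let k be a field, n ≥ 1 and r ≤ n natural numbers, and M an n×n skew-symmetric matrix over k whose last r rows and last r columns are zero. Let Sym_{M,n,r}(k) be the set of symmetric n×n matrices L whose top-left (n-r)×(n-r) block is zero. Then the operation L ⊕ N = L + N - 2(N M L) + 2(L M N) makes Sym_{M,n,r}(k) into a group with identity 0 and inverse of L equal to -L. -/
import Mathlib


/-- The set `Sym_{M,n,r}(k)`: symmetric `n × n` matrices whose top-left
`(n-r) × (n-r)` block vanishes. -/
def SymMnr (k : Type*) [Field k] (n r : ℕ) : Set (Matrix (Fin n) (Fin n) k) :=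
  {L | L.transpose = L ∧ ∀ i j : Fin n, (i : ℕ) < n - r → (j : ℕ) < n - r → L i j = 0}

/-- The operation `L ⊕ N = L + N - 2(NML) + 2(LMN)`. -/
def oplus {k : Type*} [Field k] {n : ℕ} (M L N : Matrix (Fin n) (Fin n) k) :
    Matrix (Fin n) (Fin n) k :=
  L + N - (2 : k) • (N * M * L) + (2 : k) • (L * M * N)

/-- Key identity: `M T M = 0` whenever `T` has vanishing top-left block. -/
lemma key_MTM {k : Type*} [Field k] {n r : ℕ}
    (M : Matrix (Fin n) (Fin n) k)
    (hMzero : ∀ i j : Fin n, (n - r ≤ (i : ℕ) ∨ n - r ≤ (j : ℕ)) → M i j = 0)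
    (T : Matrix (Fin n) (Fin n) k)
    (hT : ∀ i j : Fin n, (i : ℕ) < n - r → (j : ℕ) < n - r → T i j = 0) :
    M * T * M = 0 := by
  ext i j
  rw [Matrix.mul_apply, Matrix.zero_apply]
  apply Finset.sum_eq_zero
  intro b _
  by_cases hb : (b : ℕ) < n - r
  · rw [Matrix.mul_apply]
    have h0 : ∀ a ∈ (Finset.univ : Finset (Fin n)), M i a * T a b = 0 := by
      intro a _
      by_cases ha : (a : ℕ) < n - r
      · rw [hT a b ha hb, mul_zero]
      · rw [hMzero i a (Or.inr (le_of_not_gt ha)), zero_mul]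
    rw [Finset.sum_eq_zero h0, zero_mul]
  · rw [hMzero b j (Or.inl (le_of_not_gt hb)), mul_zero]

/-- Entries of `A * M * B` in the top-left block vanish when `A` does. -/
lemma entry_zero {k : Type*} [Field k] {n r : ℕ}
    (M : Matrix (Fin n) (Fin n) k)
    (hMzero : ∀ i j : Fin n, (n - r ≤ (i : ℕ) ∨ n - r ≤ (j : ℕ)) → M i j = 0)
    (A B : Matrix (Fin n) (Fin n) k)
    (hA : ∀ i j : Fin n, (i : ℕ) < n - r → (j : ℕ) < n - r → A i j = 0)
    (i j : Fin n) (hi : (i : ℕ) < n - r) (hj : (j : ℕ) < n - r) :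
    (A * M * B) i j = 0 := by
  rw [mul_assoc, Matrix.mul_apply]
  apply Finset.sum_eq_zero
  intro a _
  by_cases ha : (a : ℕ) < n - r
  · rw [hA i a hi ha, zero_mul]
  · have : (M * B) a j = 0 := by
      rw [Matrix.mul_apply]
      apply Finset.sum_eq_zero
      intro b _
      rw [hMzero a b (Or.inl (le_of_not_gt ha)), zero_mul]
    rw [this, mul_zero]

/-- `Sym_{M,n,r}(k)` is a group under `⊕`, with identity `0` and
inverse of `L` equal to `-L`. -/
theorem statement0 {k : Type*} [Field k] (hchar : (2 : k) ≠ 0)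
    (n r : ℕ) (hn : 1 ≤ n) (hr : r ≤ n)
    (M : Matrix (Fin n) (Fin n) k) (hskew : M.transpose = -M)
    (hMzero : ∀ i j : Fin n, (n - r ≤ (i : ℕ) ∨ n - r ≤ (j : ℕ)) → M i j = 0) :
    (0 : Matrix (Fin n) (Fin n) k) ∈ SymMnr k n r ∧
    (∀ L N, L ∈ SymMnr k n r → N ∈ SymMnr k n r → oplus M L N ∈ SymMnr k n r) ∧
    (∀ L ∈ SymMnr k n r, oplus M L 0 = L ∧ oplus M 0 L = L) ∧
    (∀ L ∈ SymMnr k n r, -L ∈ SymMnr k n r ∧ oplus M L (-L) = 0 ∧ oplus M (-L) L = 0) ∧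
    (∀ L N P, L ∈ SymMnr k n r → N ∈ SymMnr k n r → P ∈ SymMnr k n r →
      oplus M (oplus M L N) P = oplus M L (oplus M N P)) := by
  refine ⟨⟨by simp, by simp⟩, ?_, ?_, ?_, ?_⟩
  · -- closure
    rintro L N ⟨hLs, hLz⟩ ⟨hNs, hNz⟩
    refine ⟨?_, ?_⟩
    · simp only [oplus, Matrix.transpose_add, Matrix.transpose_sub, Matrix.transpose_smul,
        Matrix.transpose_mul, hskew, hLs, hNs]
      simp only [Matrix.mul_neg, Matrix.neg_mul, smul_neg, mul_assoc]
      abel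
    · intro i j hi hj
      simp only [oplus, Matrix.add_apply, Matrix.sub_apply, Matrix.smul_apply,
        hLz i j hi hj, hNz i j hi hj,
        entry_zero M hMzero N L hNz i j hi hj,
        entry_zero M hMzero L N hLz i j hi hj, smul_zero, add_zero, sub_zero]
  · -- identity
    rintro L ⟨hLs, hLz⟩
    constructor <;> simp [oplus]
  · -- inverse
    rintro L ⟨hLs, hLz⟩
    refine ⟨⟨by rw [Matrix.transpose_neg, hLs], fun i j hi hj => by
      simp [hLz i j hi hj]⟩, ?_, ?_⟩ <;>
    · simp only [oplus, Matrix.neg_mul, Matrix.mul_neg, smul_neg, sub_neg_eq_add]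
      abel
  · -- associativity
    rintro L N P ⟨hLs, hLz⟩ ⟨hNs, hNz⟩ ⟨hPs, hPz⟩
    have kL := key_MTM M hMzero L hLz
    have kN := key_MTM M hMzero N hNz
    have kP := key_MTM M hMzero P hPz
    have kL' : ∀ B, M * (L * (M * B)) = 0 := fun B => by
      rw [← mul_assoc, ← mul_assoc, kL, zero_mul]
    have kN' : ∀ B, M * (N * (M * B)) = 0 := fun B => by
      rw [← mul_assoc, ← mul_assoc, kN, zero_mul]
    have kP' : ∀ B, M * (P * (M * B)) = 0 := fun B => by
      rw [← mul_assoc, ← mul_assoc, kP, zero_mul]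
    simp only [oplus, Matrix.mul_add, Matrix.add_mul, Matrix.mul_sub, Matrix.sub_mul,
      Matrix.mul_smul, Matrix.smul_mul, smul_add, smul_sub, smul_smul, mul_assoc,
      kL, kN, kP, kL', kN', kP', mul_zero, zero_mul, Matrix.mul_zero, Matrix.zero_mul,
      smul_zero, add_zero, sub_zero, zero_sub, zero_add]
    module
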